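/- Let P be an n×n real positive definite matrix, R an m×m real positive definite matrix, L an m×n real matrix, m₀ ∈ ℝⁿ, and y ∈ ℝᵐ. Set S = L P Lᵀ + R and K = P Lᵀ S⁻¹. Then the Kalman update mean x̂ = m₀ + K (y − L m₀) is the unique minimizer over x ∈ ℝⁿ of the quadratic functional F(x) = (y − L x)ᵀ R⁻¹ (y − L x) + (x − m₀)ᵀ P⁻¹ (x − m₀). -/

import Mathlib

open Matrix

private lemma dot_swap {k l : ℕ} (M : Matrix (Fin k) (Fin l) ℝ) (u : Fin k → ℝ)
    (v : Fin l → ℝ) : u ⬝ᵥ M.mulVec v = Mᵀ.mulVec u ⬝ᵥ v := by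
  rw [dotProduct_mulVec, mulVec_transpose]

private lemma mulVec_dot {k l : ℕ} (M : Matrix (Fin k) (Fin l) ℝ) (u : Fin l → ℝ)
    (v : Fin k → ℝ) : M.mulVec u ⬝ᵥ v = u ⬝ᵥ Mᵀ.mulVec v := by
  rw [dot_swap, transpose_transpose]

private lemma quad_expand {k : ℕ} (M : Matrix (Fin k) (Fin k) ℝ) (hM : Mᵀ = M)
    (u v : Fin k → ℝ) :
    (u + v) ⬝ᵥ M.mulVec (u + v) =
      u ⬝ᵥ M.mulVec u + 2 * (v ⬝ᵥ M.mulVec u) + v ⬝ᵥ M.mulVec v := by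
  have h : u ⬝ᵥ M.mulVec v = v ⬝ᵥ M.mulVec u := by
    rw [dot_swap, hM, dotProduct_comm]
  simp [mulVec_add, dotProduct_add, add_dotProduct, h]
  ring

/-- The Kalman update mean `x̂ = m₀ + K (y − L m₀)`, with `S = L P Lᵀ + R` and
`K = P Lᵀ S⁻¹`, is the unique minimizer of the Tikhonov-type functional
`F(x) = (y − L x)ᵀ R⁻¹ (y − L x) + (x − m₀)ᵀ P⁻¹ (x − m₀)`. -/
theorem kalman_update_mean_is_unique_minimizer {n m : ℕ}
    (P : Matrix (Fin n) (Fin n) ℝ) (R : Matrix (Fin m) (Fin m) ℝ)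
    (L : Matrix (Fin m) (Fin n) ℝ)
    (hP : P.PosDef) (hR : R.PosDef)
    (m₀ : Fin n → ℝ) (y : Fin m → ℝ)
    (S : Matrix (Fin m) (Fin m) ℝ) (hS : S = L * P * Lᵀ + R)
    (K : Matrix (Fin n) (Fin m) ℝ) (hK : K = P * Lᵀ * S⁻¹)
    (F : (Fin n → ℝ) → ℝ)
    (hF : F = fun x =>
      (y - L.mulVec x) ⬝ᵥ R⁻¹.mulVec (y - L.mulVec x) +
      (x - m₀) ⬝ᵥ P⁻¹.mulVec (x - m₀))
    (xhat : Fin n → ℝ) (hxhat : xhat = m₀ + K.mulVec (y - L.mulVec m₀)) :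
    (∀ x, F xhat ≤ F x) ∧ (∀ x, F x ≤ F xhat → x = xhat) := by
  -- Positive definiteness of S
  have hLPLt : (L * P * Lᵀ).PosSemidef := by
    have := hP.posSemidef.mul_mul_conjTranspose_same L
    simpa using this
  have hS_pd : S.PosDef := hS ▸ Matrix.PosDef.posSemidef_add hLPLt hR
  -- invertibility facts
  have hSinv : S * S⁻¹ = 1 := mul_nonsing_inv S (isUnit_iff_isUnit_det S |>.1 hS_pd.isUnit)
  have hPinv : P⁻¹ * P = 1 := nonsing_inv_mul P (isUnit_iff_isUnit_det P |>.1 hP.isUnit)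
  have hRinv : R⁻¹ * R = 1 := nonsing_inv_mul R (isUnit_iff_isUnit_det R |>.1 hR.isUnit)
  -- symmetry of inverses
  have hRsym : (R⁻¹)ᵀ = R⁻¹ := by
    have := hR.inv.isHermitian
    simpa [IsHermitian] using this
  have hPsym : (P⁻¹)ᵀ = P⁻¹ := by
    have := hP.inv.isHermitian
    simpa [IsHermitian] using this
  -- Hessian matrix
  set A : Matrix (Fin n) (Fin n) ℝ := Lᵀ * R⁻¹ * L + P⁻¹ with hA
  have hLRL : (Lᵀ * R⁻¹ * L).PosSemidef := by
    have := hR.inv.posSemidef.conjTranspose_mul_mul_same L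
    simpa using this
  have hA_pd : A.PosDef := Matrix.PosDef.posSemidef_add hLRL hP.inv
  -- key matrix identity for the gradient
  have hgradM : P⁻¹ * K = Lᵀ * R⁻¹ * (1 - L * K) := by
    have hLK : L * K = 1 - R * S⁻¹ := by
      have h0 : (L * P * Lᵀ) * S⁻¹ + R * S⁻¹ = 1 := by
        rw [← Matrix.add_mul, ← hS, hSinv]
      rw [hK, eq_sub_iff_add_eq, ← h0, ← Matrix.mul_assoc, ← Matrix.mul_assoc]
    rw [hLK, hK]
    have h1 : P⁻¹ * (P * Lᵀ * S⁻¹) = (P⁻¹ * P) * (Lᵀ * S⁻¹) := by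
      simp only [Matrix.mul_assoc]
    rw [h1, hPinv, Matrix.one_mul]
    have h2 : Lᵀ * R⁻¹ * (1 - (1 - R * S⁻¹)) = Lᵀ * ((R⁻¹ * R) * S⁻¹) := by
      simp only [sub_sub_cancel, Matrix.mul_assoc]
    rw [h2, hRinv, Matrix.one_mul]
  -- gradient vanishes at xhat
  have hgrad : P⁻¹.mulVec (xhat - m₀) = (Lᵀ * R⁻¹).mulVec (y - L.mulVec xhat) := by
    have hd : xhat - m₀ = K.mulVec (y - L.mulVec m₀) := by rw [hxhat]; abel
    have hy : y - L.mulVec xhat = (1 - L * K).mulVec (y - L.mulVec m₀) := by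
      rw [hxhat, sub_mulVec, one_mulVec, mulVec_add, ← mulVec_mulVec]
      abel
    rw [hd, hy, mulVec_mulVec, mulVec_mulVec, hgradM, Matrix.mul_assoc]
  -- main expansion: F x = F xhat + (x - xhat) ⬝ᵥ A (x - xhat)
  have hexp : ∀ x, F x = F xhat + (x - xhat) ⬝ᵥ A.mulVec (x - xhat) := by
    intro x
    set d := x - xhat with hdd
    have hx1 : y - L.mulVec x = (y - L.mulVec xhat) + (-(L.mulVec d)) := by
      rw [hdd, mulVec_sub]; abel
    have hx2 : x - m₀ = (xhat - m₀) + d := by rw [hdd]; abel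
    rw [hF]
    simp only [hx1, hx2]
    rw [quad_expand R⁻¹ hRsym, quad_expand P⁻¹ hPsym]
    have hc1 : (-(L.mulVec d)) ⬝ᵥ R⁻¹.mulVec (y - L.mulVec xhat)
        = -(d ⬝ᵥ (Lᵀ * R⁻¹).mulVec (y - L.mulVec xhat)) := by
      rw [neg_dotProduct, mulVec_dot, mulVec_mulVec]
    have hc2 : d ⬝ᵥ P⁻¹.mulVec (xhat - m₀)
        = d ⬝ᵥ (Lᵀ * R⁻¹).mulVec (y - L.mulVec xhat) := by rw [hgrad]
    have hq1 : (-(L.mulVec d)) ⬝ᵥ R⁻¹.mulVec (-(L.mulVec d))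
        = d ⬝ᵥ (Lᵀ * R⁻¹ * L).mulVec d := by
      rw [mulVec_neg, dotProduct_neg, neg_dotProduct, neg_neg, mulVec_dot,
        mulVec_mulVec, mulVec_mulVec]
    rw [hc1, hc2, hq1, hA, add_mulVec, dotProduct_add]
    ring
  have hAnonneg : ∀ v : Fin n → ℝ, 0 ≤ v ⬝ᵥ A.mulVec v := fun v => by
    simpa using hA_pd.posSemidef.dotProduct_mulVec_nonneg v
  constructor
  · intro x
    rw [hexp x]
    have := hAnonneg (x - xhat)
    linarith
  · intro x hx
    rw [hexp x] at hx
    by_contra hne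
    have hdne : x - xhat ≠ 0 := sub_ne_zero.mpr hne
    have := hA_pd.dotProduct_mulVec_pos hdne
    simp only [star_trivial] at this
    linarith
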